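/- arXiv:2010.14382 — 10 statements merged into one kernel-verified Lean document; each statement's English description precedes it below -/
import Mathlib

section
/- Let n ≥ 2. For every (x₁,…,xₙ) ∈ [0,1]ⁿ, the point (x₁,…,xₙ, max(x₁+⋯+xₙ−(n−1), 0)) belongs to the convex hull in ℝ^{n+1} of the 2ⁿ points v(ε) = (ε₁,…,εₙ, ∏ᵢ εᵢ) with ε ∈ {0,1}ⁿ. (Sharpness of the lower Fréchet–Hoeffding bound for the conjunction of n conditional events.) -/
/-! With product weights `w ε = ∏ᵢ (if εᵢ then zᵢ else 1 - zᵢ)` (the law of independent events of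
probabilities `zᵢ`), every `(z, ∏ᵢ zᵢ)` with `z ∈ [0,1]ⁿ` lies in the hull; in particular `(z, 0)`
does when some `zᵢ = 0`. Put `yᵢ = 1 - xᵢ` and `S = ∑ᵢ yᵢ`, so that `T_L(x) = max (1 - S) 0`.
If `S ≤ 1`, then `(x, 1 - S) = (1 - S) • v(𝟙) + ∑ᵢ yᵢ • v(𝟙 - eᵢ)`. If `S ≥ 1`, then
`x = ∑ᵢ (yᵢ / S) • zⁱ` where `zⁱ` vanishes at `i` and has `j`-th coordinate `S xⱼ / (S - yⱼ)`
otherwise, so `(x, 0)` is a convex combination of points `(zⁱ, 0)` of the hull. -/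

open Finset

section

variable {ι : Type*} [Fintype ι]

def liftedCubeVertices (ι : Type*) [Fintype ι] : Set ((ι → ℝ) × ℝ) :=
  {q | ∃ ε : ι → Bool, q = (fun i => if ε i then 1 else 0, ∏ i, if ε i then (1 : ℝ) else 0)}

variable [DecidableEq ι]

theorem sum_prod_bernoulli_mul_prod (z : ι → ℝ) (h : ι → Bool → ℝ) :
    ∑ ε : ι → Bool, (∏ j, if ε j then z j else 1 - z j) * ∏ j, h j (ε j) =
      ∏ j, (z j * h j true + (1 - z j) * h j false) := by
  simp_rw [← prod_mul_distrib]
  rw [← Fintype.prod_sum fun j b => (if b then z j else 1 - z j) * h j b]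
  simp

theorem mk_prod_mem_convexHull {z : ι → ℝ} (hz : ∀ i, z i ∈ Set.Icc 0 1) :
    (z, ∏ i, z i) ∈ convexHull ℝ (liftedCubeVertices ι) := by
  set w : (ι → Bool) → ℝ := fun ε => ∏ j, if ε j then z j else 1 - z j
  have hw_nonneg (ε : ι → Bool) : 0 ≤ w ε :=
    prod_nonneg fun j _ => by split_ifs <;> linarith [(hz j).1, (hz j).2]
  have hw_sum : ∑ ε, w ε = 1 := by
    simpa using sum_prod_bernoulli_mul_prod z fun _ _ => 1
  have hw_marginal (i : ι) : ∑ ε, w ε * (if ε i then 1 else 0) = z i := by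
    let h : ι → Bool → ℝ := fun j b => if j = i then (if b then 1 else 0) else 1
    calc ∑ ε, w ε * (if ε i then 1 else 0) = ∑ ε, w ε * ∏ j, h j (ε j) := by simp [h]
      _ = ∏ j, (z j * h j true + (1 - z j) * h j false) := sum_prod_bernoulli_mul_prod z h
      _ = ∏ j, if j = i then z j else 1 := prod_congr rfl fun j _ => by split_ifs <;> simp [h, *]
      _ = z i := by simp
  have hw_top : ∑ ε, w ε * ∏ j, (if ε j then (1 : ℝ) else 0) = ∏ j, z j := by
    simpa using sum_prod_bernoulli_mul_prod z fun _ b => if b then 1 else 0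
  have hmem := (convex_convexHull ℝ (liftedCubeVertices ι)).sum_mem (t := univ)
    (fun ε _ => hw_nonneg ε) hw_sum (fun ε _ => subset_convexHull ℝ _ ⟨ε, rfl⟩)
  convert hmem using 1
  refine Prod.ext (funext fun i => ?_) ?_
  · rw [Prod.fst_sum, Finset.sum_apply]
    exact (hw_marginal i).symm
  · rw [Prod.snd_sum]
    exact hw_top.symm

/-- The point `t • (𝟙, 1) + ∑ᵢ wᵢ • (Function.update a i 0, 0)`. -/
theorem mk_mem_convexHull_of_mixture {t : ℝ} {w a : ι → ℝ} (ht : 0 ≤ t) (hw : ∀ i, 0 ≤ w i)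
    (hsum : t + ∑ i, w i = 1) (ha : ∀ i, a i ∈ Set.Icc 0 1) :
    (fun j => t + (1 - t - w j) * a j, t) ∈ convexHull ℝ (liftedCubeVertices ι) := by
  let μ : Option ι → ℝ := fun o => o.elim t w
  let p : Option ι → (ι → ℝ) × ℝ := fun o => o.elim (1, 1) fun i => (Function.update a i 0, 0)
  have hp : ∀ o, p o ∈ convexHull ℝ (liftedCubeVertices ι)
    | none => by simpa [p] using mk_prod_mem_convexHull (z := 1) fun _ => ⟨zero_le_one, le_rfl⟩
    | some i => by
      have hface : ∀ j, Function.update a i 0 j ∈ Set.Icc 0 1 := fun j => by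
        rw [Function.update_apply]
        split_ifs
        exacts [⟨le_rfl, zero_le_one⟩, ha j]
      simpa [p, prod_eq_zero (mem_univ i)] using mk_prod_mem_convexHull hface
  have hmem := (convex_convexHull ℝ (liftedCubeVertices ι)).sum_mem (t := univ) (w := μ)
    (fun o _ => by cases o; exacts [ht, hw _]) (by simpa [μ, Fintype.sum_option] using hsum)
    (fun o _ => hp o)
  convert hmem using 1
  rw [Fintype.sum_option]
  refine Prod.ext (funext fun j => ?_) ?_
  · have : ∑ i, w i * Function.update a i 0 j = (∑ i, w i - w j) * a j := by
      rw [← add_sum_erase _ _ (mem_univ j), Function.update_self, mul_zero, zero_add,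
        sum_congr rfl fun i hi => by rw [Function.update_of_ne (ne_of_mem_erase hi).symm],
        ← sum_mul, sum_erase_eq_sub (mem_univ j)]
    simp only [μ, p, Option.elim_none, Option.elim_some, Prod.smul_mk, smul_eq_mul, mul_one,
      mul_zero, Prod.fst_add, Prod.fst_sum, Pi.add_apply, Pi.smul_apply, Pi.one_apply,
      Finset.sum_apply, add_right_inj]
    rw [this]
    linear_combination (-a j) * hsum
  · simp [μ, p, Prod.snd_sum]

theorem mk_lukasiewicz_mem_convexHull {x : ι → ℝ} (hx : ∀ i, x i ∈ Set.Icc 0 1) :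
    (x, max (∑ i, x i - ((Fintype.card ι : ℝ) - 1)) 0) ∈
      convexHull ℝ (liftedCubeVertices ι) := by
  set S := ∑ i, (1 - x i) with hS
  have hT : ∑ i, x i - ((Fintype.card ι : ℝ) - 1) = 1 - S := by
    simp only [hS, sum_sub_distrib, sum_const, card_univ, nsmul_eq_mul, mul_one]
    ring
  rw [hT]
  rcases le_total S 1 with hS1 | hS1
  · rw [max_eq_left (by linarith)]
    convert mk_mem_convexHull_of_mixture (t := 1 - S) (w := fun i => 1 - x i) (a := 1)
      (by linarith) (fun i => by linarith [(hx i).2]) (by ring)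
      (fun _ => ⟨zero_le_one, le_rfl⟩) using 2
    funext j
    simp only [Pi.one_apply]
    ring
  · have hS0 : 0 < S := by linarith
    let a : ι → ℝ := fun j => S * x j / (S - 1 + x j)
    have ha : ∀ j, a j ∈ Set.Icc 0 1 := fun j =>
      ⟨div_nonneg (mul_nonneg hS0.le (hx j).1) (by linarith [(hx j).1]),
        div_le_one_of_le₀ (by nlinarith [mul_nonneg (sub_nonneg.2 hS1) (sub_nonneg.2 (hx j).2)])
          (by linarith [(hx j).1])⟩
    rw [max_eq_right (by linarith)]
    convert mk_mem_convexHull_of_mixture (t := 0) (w := fun i => (1 - x i) / S) (a := a)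
      le_rfl (fun i => div_nonneg (by linarith [(hx i).2]) hS0.le)
      (by rw [← sum_div, ← hS, div_self hS0.ne', zero_add]) ha using 2
    funext j
    rcases eq_or_ne (S - 1 + x j) 0 with h | h
    · have hxj : x j = 0 := by linarith [(hx j).1]
      simp [a, hxj]
    · simp only [a]
      field_simp
      ring

theorem lower_frechet_bound_sharp_general (n : ℕ)
    (x : Fin n → ℝ) (hx : ∀ i, x i ∈ Set.Icc (0 : ℝ) 1) :
    (x, max ((∑ i, x i) - ((n : ℝ) - 1)) 0) ∈
      convexHull ℝ {q : (Fin n → ℝ) × ℝ | ∃ ε : Fin n → Bool,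
        q = (fun i => if ε i then 1 else 0, ∏ i, if ε i then (1 : ℝ) else 0)} := by
  have h := mk_lukasiewicz_mem_convexHull hx
  rw [Fintype.card_fin] at h
  exact h

/-- Sharpness of the lower Fréchet–Hoeffding bound: for every
    `(x₁,…,xₙ) ∈ [0,1]ⁿ` the point `(x₁,…,xₙ, T_L(x₁,…,xₙ))` belongs to the
    convex hull of the 2ⁿ points `v(ε) = (ε₁,…,εₙ, ∏ᵢ εᵢ)`, `ε ∈ {0,1}ⁿ`. -/
theorem lower_frechet_bound_sharp (n : ℕ) (hn : 2 ≤ n)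
    (x : Fin n → ℝ) (hx : ∀ i, x i ∈ Set.Icc (0 : ℝ) 1) :
    (x, max ((∑ i, x i) - ((n : ℝ) - 1)) 0) ∈
      convexHull ℝ {q : (Fin n → ℝ) × ℝ | ∃ ε : Fin n → Bool,
        q = (fun i => if ε i then 1 else 0, ∏ i, if ε i then (1 : ℝ) else 0)} :=
  lower_frechet_bound_sharp_general n x hx
end
end

section
/- Let n ≥ 2. For every (x₁,…,xₙ) ∈ [0,1]ⁿ, the point (x₁,…,xₙ, min{x₁,…,xₙ}) belongs to the convex hull in ℝ^{n+1} of the 2ⁿ points v(ε) = (ε₁,…,εₙ, ∏ᵢ εᵢ) with ε ∈ {0,1}ⁿ. (Sharpness of the upper Fréchet–Hoeffding bound for the conjunction of n conditional events.) -/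
/-!
Layer-cake argument: for `s` uniform on `(0, 1]`, the random vertex `v(ε(s))` with
`ε(s)ᵢ = [s < xᵢ]` has coordinates of mean `xᵢ`, and its last coordinate
`∏ᵢ [s < xᵢ] = [s < min x]` has mean `min x`. So `(x, min x)` is the expectation of a random
vertex, and the expectation of a random variable supported on a finite set lies in its convex hull.
-/

open MeasureTheory Set

theorem integral_mem_convexHull_of_finite {α E : Type*} [MeasurableSpace α]
    [NormedAddCommGroup E] [NormedSpace ℝ E] [CompleteSpace E] {μ : Measure α}
    [IsProbabilityMeasure μ] {S : Set E} (hS : S.Finite) {f : α → E} (hfS : ∀ᵐ a ∂μ, f a ∈ S)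
    (hf : Integrable f μ) : ∫ a, f a ∂μ ∈ convexHull ℝ S :=
  (convex_convexHull ℝ S).integral_mem (hS.isCompact_convexHull (𝕜 := ℝ)).isClosed
    (hfS.mono fun _ ha => subset_convexHull ℝ S ha) hf

theorem lt_ciInf_iff_of_finite {ι α : Type*} [Finite ι] [Nonempty ι]
    [ConditionallyCompleteLinearOrder α] {f : ι → α} {a : α} :
    a < ⨅ i, f i ↔ ∀ i, a < f i := by
  obtain ⟨i₀, hi₀⟩ := exists_eq_ciInf_of_finite (f := f)
  exact ⟨fun h i => h.trans_le (ciInf_le (finite_range f).bddBelow i), fun h => hi₀ ▸ h i₀⟩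

theorem ite_lt_eq_indicator (c s : ℝ) :
    (if s < c then (1 : ℝ) else 0) = (Iio c).indicator 1 s := by
  simp [indicator_apply]

theorem integrable_ite_lt {μ : Measure ℝ} [IsFiniteMeasure μ] (c : ℝ) :
    Integrable (fun s => if s < c then (1 : ℝ) else 0) μ := by
  simp only [ite_lt_eq_indicator]
  exact (integrable_const 1).indicator measurableSet_Iio

theorem integral_ite_lt_Ioc {c : ℝ} (hc : c ∈ Icc (0 : ℝ) 1) :
    ∫ s in Ioc 0 1, (if s < c then (1 : ℝ) else 0) = c := by
  have hinter : Iio c ∩ Ioc 0 1 = Ioo 0 c := by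
    ext s
    simp only [mem_inter_iff, mem_Iio, mem_Ioc, mem_Ioo]
    grind
  simp only [ite_lt_eq_indicator]
  rw [integral_indicator_one measurableSet_Iio, measureReal_restrict_apply measurableSet_Iio,
    hinter, Real.volume_real_Ioo_of_le hc.1, sub_zero]

section BooleanVertex

variable {ι : Type*} [Fintype ι]

def booleanVertex (ε : ι → Bool) : (ι → ℝ) × ℝ :=
  (fun i => if ε i then 1 else 0, ∏ i, if ε i then (1 : ℝ) else 0)

theorem booleanVertex_decide_lt [Nonempty ι] (x : ι → ℝ) (s : ℝ) :
    booleanVertex (fun i => decide (s < x i)) =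
      (fun i => if s < x i then 1 else 0, if s < ⨅ i, x i then 1 else 0) := by
  simp only [booleanVertex, decide_eq_true_eq, Fintype.prod_boole, lt_ciInf_iff_of_finite]

theorem integrable_booleanVertex_decide_lt [Nonempty ι] {μ : Measure ℝ} [IsFiniteMeasure μ]
    (x : ι → ℝ) : Integrable (fun s => booleanVertex (fun i => decide (s < x i))) μ := by
  simp only [booleanVertex_decide_lt]
  exact (Integrable.of_eval fun i => integrable_ite_lt (x i)).prodMk (integrable_ite_lt _)

theorem integral_booleanVertex_decide_lt [Nonempty ι] {x : ι → ℝ}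
    (hx : ∀ i, x i ∈ Icc (0 : ℝ) 1) :
    ∫ s in Ioc 0 1, booleanVertex (fun i => decide (s < x i)) = (x, ⨅ i, x i) := by
  have hinf : ⨅ i, x i ∈ Icc (0 : ℝ) 1 := by
    obtain ⟨i₀, hi₀⟩ := exists_eq_ciInf_of_finite (f := x)
    exact hi₀ ▸ hx i₀
  simp only [booleanVertex_decide_lt]
  rw [integral_pair (Integrable.of_eval fun i => integrable_ite_lt (x i)) (integrable_ite_lt _),
    integral_ite_lt_Ioc hinf]
  congr 1
  ext i
  rw [eval_integral fun i => integrable_ite_lt (x i), integral_ite_lt_Ioc (hx i)]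

theorem mem_convexHull_range_booleanVertex [Nonempty ι] {x : ι → ℝ}
    (hx : ∀ i, x i ∈ Icc (0 : ℝ) 1) :
    (x, ⨅ i, x i) ∈ convexHull ℝ (range (booleanVertex (ι := ι))) := by
  have : IsProbabilityMeasure (volume.restrict (Ioc (0 : ℝ) 1)) := ⟨by simp⟩
  rw [← integral_booleanVertex_decide_lt hx]
  exact integral_mem_convexHull_of_finite (finite_range _)
    (ae_of_all _ fun _ => mem_range_self _) (integrable_booleanVertex_decide_lt x)

end BooleanVertex

/-- Sharpness of the upper Fréchet–Hoeffding bound: for every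
    `(x₁,…,xₙ) ∈ [0,1]ⁿ` the point `(x₁,…,xₙ, T_M(x₁,…,xₙ))` belongs to the
    convex hull of the 2ⁿ points `v(ε) = (ε₁,…,εₙ, ∏ᵢ εᵢ)`, `ε ∈ {0,1}ⁿ`. -/
theorem upper_frechet_bound_sharp (n : ℕ) (hn : 2 ≤ n)
    (x : Fin n → ℝ) (hx : ∀ i, x i ∈ Set.Icc (0 : ℝ) 1) :
    (x, ⨅ i, x i) ∈
      convexHull ℝ {q : (Fin n → ℝ) × ℝ | ∃ ε : Fin n → Bool,
        q = (fun i => if ε i then 1 else 0, ∏ i, if ε i then (1 : ℝ) else 0)} := by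
  have : Nonempty (Fin n) := ⟨⟨0, by omega⟩⟩
  have hvertices : {q : (Fin n → ℝ) × ℝ | ∃ ε : Fin n → Bool, q = booleanVertex ε} =
      range booleanVertex := by
    ext q
    exact exists_congr fun _ => eq_comm
  exact hvertices ▸ mem_convexHull_range_booleanVertex hx
end

section
/- Let n ≥ 2. The convex hull in ℝ^{n+1} of the 2ⁿ points v(ε) = (ε₁,…,εₙ, ∏ᵢ εᵢ), ε ∈ {0,1}ⁿ, equals the set Π = {(x₁,…,xₙ,z) ∈ ℝ^{n+1} : (x₁,…,xₙ) ∈ [0,1]ⁿ and max(x₁+⋯+xₙ−(n−1), 0) ≤ z ≤ min{x₁,…,xₙ}}. (The set of coherent prevision assessments on n conditional events and their conjunction coincides with the polytope I*.) -/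
/-!
Every defining inequality of Π holds at the vertices `v(ε)` and is preserved by convex
combinations, so the hull lies in Π. Conversely, for `(x, z) ∈ Π` with `z < 1` write
`(x, z) = z • (1, 1) + (1 - z) • (y, 0)` with `yᵢ = (xᵢ - z) / (1 - z)`; the lower bound on `z`
becomes `∑ (1 - yᵢ) ≥ 1`. Such a `y ∈ [0,1]ⁿ` is the combination, with weights proportional to
`1 - yⱼ`, of points of the cube faces `{yⱼ = 0}`, and `(w, 0)` lies in the hull for every `w` in
such a face, since the vertices of that face are the `v(ε)` with `εⱼ = 0`.
-/

open Finset Set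

section

variable {ι : Type*} [Fintype ι]

def conjVertex (ε : ι → Bool) : (ι → ℝ) × ℝ :=
  (fun i => if ε i then 1 else 0, ∏ i, if ε i then (1 : ℝ) else 0)

/-- `T_L(x) ≤ z ≤ T_M(x)` with `x ∈ [0,1]ⁿ`; the lower bound is written in union-bound form
`1 - z ≤ ∑ (1 - xᵢ)`, and `0 ≤ xᵢ` follows from `0 ≤ z ≤ xᵢ`. -/
def FrechetBounds (x : ι → ℝ) (z : ℝ) : Prop :=
  (∀ i, x i ≤ 1) ∧ (∀ i, z ≤ x i) ∧ 0 ≤ z ∧ 1 - z ≤ ∑ i, (1 - x i)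

lemma conjVertex_true : conjVertex (fun _ : ι => true) = (fun _ => 1, 1) := by
  simp [conjVertex]

lemma frechetBounds_conjVertex (ε : ι → Bool) :
    FrechetBounds (conjVertex ε).1 (conjVertex ε).2 := by
  by_cases hε : ∀ i, ε i
  · simp [conjVertex, FrechetBounds, hε]
  · obtain ⟨j, hj⟩ := not_forall.1 hε
    have hprod : (∏ i, if ε i then (1 : ℝ) else 0) = 0 :=
      prod_eq_zero (mem_univ j) (by simp [hj])
    refine ⟨fun i => ?_, fun i => ?_, by simp [conjVertex, hprod], ?_⟩
    · simp only [conjVertex]; split_ifs <;> norm_num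
    · simp only [conjVertex, hprod]; split_ifs <;> norm_num
    · simp only [conjVertex, hprod, sub_zero]
      calc (1 : ℝ) = 1 - if ε j then 1 else 0 := by simp [hj]
        _ ≤ ∑ i, (1 - if ε i then (1 : ℝ) else 0) :=
          single_le_sum (f := fun i => 1 - if ε i then (1 : ℝ) else 0)
            (fun i _ => by split_ifs <;> norm_num) (mem_univ j)

lemma convex_frechetBounds : Convex ℝ {p : (ι → ℝ) × ℝ | FrechetBounds p.1 p.2} := by
  rintro p ⟨hp₁, hp₂, hp₃, hp₄⟩ q ⟨hq₁, hq₂, hq₃, hq₄⟩ a b ha hb hab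
  have hsum : ∑ i, (1 - (a * p.1 i + b * q.1 i)) =
      a * ∑ i, (1 - p.1 i) + b * ∑ i, (1 - q.1 i) := by
    rw [mul_sum, mul_sum, ← sum_add_distrib]
    exact sum_congr rfl fun i _ => by linear_combination -hab
  simp only [FrechetBounds, mem_ofPred_eq, Prod.fst_add, Prod.snd_add, Prod.smul_fst,
    Prod.smul_snd, Pi.add_apply, Pi.smul_apply, smul_eq_mul, hsum]
  refine ⟨fun i => ?_, fun i => ?_, by positivity, ?_⟩
  · nlinarith [hp₁ i, hq₁ i]
  · nlinarith [hp₂ i, hq₂ i]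
  · nlinarith

lemma convexHull_conjVertex_subset :
    convexHull ℝ (range (conjVertex (ι := ι))) ⊆ {p | FrechetBounds p.1 p.2} :=
  convexHull_min (range_subset_iff.2 frechetBounds_conjVertex) convex_frechetBounds

lemma mk_zero_mem_convexHull_of_eq_zero {y : ι → ℝ} (hy : ∀ i, y i ∈ Icc (0 : ℝ) 1) {j : ι}
    (hj : y j = 0) : (y, (0 : ℝ)) ∈ convexHull ℝ (range (conjVertex (ι := ι))) := by
  classical
  set face : Set (ι → ℝ) := univ.pi fun i => if i = j then {0} else {0, 1}
  have hyface : y ∈ convexHull ℝ face := by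
    refine mem_convexHull_pi fun i _ => ?_
    split_ifs with hi
    · simp [hi, hj]
    · rw [convexHull_pair, segment_eq_Icc zero_le_one]
      exact hy i
  have hface : LinearMap.inl ℝ (ι → ℝ) ℝ '' face ⊆ range conjVertex := by
    rintro _ ⟨c, hc, rfl⟩
    have hc01 : ∀ i, c i = 0 ∨ c i = 1 := fun i => by
      by_cases hi : i = j
      · exact .inl (by simpa [hi] using hc i (mem_univ i))
      · simpa [hi] using hc i (mem_univ i)
    have hcj : c j = 0 := by simpa using hc j (mem_univ j)
    refine ⟨fun i => c i = 1, Prod.ext (funext fun i => ?_) ?_⟩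
    · rcases hc01 i with h | h <;> simp [conjVertex, h]
    · exact prod_eq_zero (mem_univ j) (by simp [hcj])
  have := convexHull_mono hface (LinearMap.image_convexHull (LinearMap.inl ℝ (ι → ℝ) ℝ) face ▸
    mem_image_of_mem _ hyface)
  simpa using this

lemma mk_zero_mem_convexHull_of_one_le_sum {y : ι → ℝ} (hy : ∀ i, y i ∈ Icc (0 : ℝ) 1)
    (hsum : 1 ≤ ∑ i, (1 - y i)) : (y, (0 : ℝ)) ∈ convexHull ℝ (range (conjVertex (ι := ι))) := by
  classical
  set D := ∑ i, (1 - y i)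
  set w : ι → ℝ := fun j => (1 - y j) / D
  set a : ι → ℝ := fun i => y i / (1 - w i)
  have hw₀ : ∀ j, 0 ≤ w j := fun j => div_nonneg (by linarith [(hy j).2]) (by linarith)
  have hw_sum : ∑ j, w j = 1 := by rw [← sum_div, div_self (by positivity)]
  have hw_le : ∀ i, w i ≤ 1 - y i := fun i => div_le_self (by linarith [(hy i).2]) hsum
  have ha : ∀ i, a i ∈ Icc (0 : ℝ) 1 := fun i =>
    ⟨div_nonneg (hy i).1 (by linarith [hw_le i, (hy i).1]),
      div_le_one_of_le₀ (by linarith [hw_le i]) (by linarith [hw_le i, (hy i).1])⟩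
  -- if `w i = 1` then `a i = 0` by the division convention, and `y i = 0` as well
  have hwa : ∀ i, (1 - w i) * a i = y i := fun i => by
    rcases eq_or_ne (1 - w i) 0 with h | h
    · have : y i = 0 := le_antisymm (by linarith [hw_le i]) (hy i).1
      rw [h, zero_mul, this]
    · exact mul_div_cancel₀ _ h
  have hcomb : ∑ j, w j • ((fun i => if i = j then 0 else a i, (0 : ℝ)) : (ι → ℝ) × ℝ) =
      (y, 0) := by
    refine Prod.ext (funext fun i => ?_) (by simp [Prod.snd_sum])
    simp only [Prod.fst_sum, Prod.smul_fst, Finset.sum_apply, Pi.smul_apply, smul_eq_mul,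
      mul_ite, mul_zero, sum_ite, sum_const_zero, zero_add, filter_ne, ← sum_mul,
      sum_erase_eq_sub (mem_univ i), hw_sum]
    linear_combination hwa i
  rw [← hcomb]
  refine (convex_convexHull ℝ _).sum_mem (fun j _ => hw₀ j) hw_sum fun j _ => ?_
  refine mk_zero_mem_convexHull_of_eq_zero (fun i => ?_) (if_pos rfl)
  split_ifs
  · simp
  · exact ha i

lemma mk_mem_convexHull_of_frechetBounds [Nonempty ι] {x : ι → ℝ} {z : ℝ}
    (h : FrechetBounds x z) : (x, z) ∈ convexHull ℝ (range (conjVertex (ι := ι))) := by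
  obtain ⟨hx₁, hzx, hz₀, hsum⟩ := h
  have htop : ((fun _ => 1, 1) : (ι → ℝ) × ℝ) ∈ convexHull ℝ (range conjVertex) :=
    subset_convexHull ℝ _ ⟨_, conjVertex_true⟩
  obtain ⟨i₀⟩ := ‹Nonempty ι›
  rcases ((hzx i₀).trans (hx₁ i₀)).eq_or_lt with rfl | hz₁
  · obtain rfl : x = fun _ => 1 := funext fun i => le_antisymm (hx₁ i) (hzx i)
    exact htop
  set y : ι → ℝ := fun i => (x i - z) / (1 - z)
  have hz : 0 < 1 - z := by linarith
  have hy : ∀ i, y i ∈ Icc (0 : ℝ) 1 := fun i =>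
    ⟨div_nonneg (by linarith [hzx i]) hz.le, (div_le_one hz).2 (by linarith [hx₁ i])⟩
  have hy_sum : 1 ≤ ∑ i, (1 - y i) := by
    have : ∀ i, 1 - y i = (1 - x i) / (1 - z) := fun i => by simp only [y]; field_simp; ring
    rw [sum_congr rfl fun i _ => this i, ← sum_div, le_div_iff₀ hz]
    linarith
  have hcomb : z • ((fun _ => 1, 1) : (ι → ℝ) × ℝ) + (1 - z) • (y, 0) = (x, z) := by
    refine Prod.ext (funext fun i => ?_) (by simp)
    simp [y]
    field_simp
    ring
  rw [← hcomb]
  exact convex_convexHull ℝ _ htop (mk_zero_mem_convexHull_of_one_le_sum hy hy_sum) hz₀ hz.le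
    (by ring)

theorem convexHull_range_conjVertex [Nonempty ι] :
    convexHull ℝ (range (conjVertex (ι := ι))) = {p | FrechetBounds p.1 p.2} :=
  (convexHull_conjVertex_subset).antisymm fun _ h => mk_mem_convexHull_of_frechetBounds h

lemma frechetBounds_iff [Nonempty ι] {x : ι → ℝ} {z : ℝ} :
    FrechetBounds x z ↔ (∀ i, x i ∈ Icc (0 : ℝ) 1) ∧
      max (∑ i, x i - (Fintype.card ι - 1)) 0 ≤ z ∧ z ≤ ⨅ i, x i := by
  rw [le_ciInf_iff (Set.finite_range x).bddBelow, max_le_iff, FrechetBounds, sum_sub_distrib]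
  simp only [sum_const, card_univ, nsmul_eq_mul, mul_one, Set.mem_Icc]
  constructor
  · rintro ⟨hx₁, hzx, hz₀, hsum⟩
    exact ⟨fun i => ⟨hz₀.trans (hzx i), hx₁ i⟩, ⟨by linarith, hz₀⟩, hzx⟩
  · rintro ⟨hx, ⟨hsum, hz₀⟩, hzx⟩
    exact ⟨fun i => (hx i).2, hzx, hz₀, by linarith⟩

end

/-- The convex hull of the 2ⁿ points `v(ε) = (ε₁,…,εₙ, ∏ᵢ εᵢ)`, `ε ∈ {0,1}ⁿ`,
    equals the set Π of coherent prevision assessments: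
    `(x₁,…,xₙ) ∈ [0,1]ⁿ` and `T_L(x₁,…,xₙ) ≤ z ≤ T_M(x₁,…,xₙ)`. -/
theorem convexHull_eq_coherent_set (n : ℕ) (hn : 2 ≤ n) :
    convexHull ℝ {q : (Fin n → ℝ) × ℝ | ∃ ε : Fin n → Bool,
        q = (fun i => if ε i then 1 else 0, ∏ i, if ε i then (1 : ℝ) else 0)} =
      {p : (Fin n → ℝ) × ℝ | (∀ i, p.1 i ∈ Set.Icc (0 : ℝ) 1) ∧
        max ((∑ i, p.1 i) - ((n : ℝ) - 1)) 0 ≤ p.2 ∧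
        p.2 ≤ ⨅ i, p.1 i} := by
  have : Nonempty (Fin n) := ⟨⟨0, by omega⟩⟩
  have hvert : {q : (Fin n → ℝ) × ℝ | ∃ ε : Fin n → Bool,
      q = (fun i => if ε i then 1 else 0, ∏ i, if ε i then (1 : ℝ) else 0)} =
      Set.range conjVertex := Set.ext fun _ => exists_congr fun _ => eq_comm
  rw [hvert, convexHull_range_conjVertex]
  ext p
  simpa using frechetBounds_iff (x := p.1) (z := p.2)
end

section
/- Let n ≥ 2. The convex hull in ℝ^{n+1} of the 2ⁿ points w(ε) = (ε₁,…,εₙ, max{ε₁,…,εₙ}), ε ∈ {0,1}ⁿ, equals the set Γ = {(x₁,…,xₙ,y) ∈ ℝ^{n+1} : (x₁,…,xₙ) ∈ [0,1]ⁿ and max{x₁,…,xₙ} ≤ y ≤ min(x₁+⋯+xₙ, 1)}. (Sharpness of the Fréchet–Hoeffding bounds S_M ≤ y ≤ S_L for the disjunction of n conditional events.) -/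
/-!
The vertices satisfy the Fréchet–Hoeffding inequalities, which are linear, so the hull lies in
`Γ`. Conversely we induct on `n`. Given `(x, y) ∈ Γ` with `t = x₀`, cap the other coordinates
at `y - t`, i.e. `βᵢ = min xᵢ (y - t)`. Then `(x, y)` is the combination, with weights `1 - t`
and `t`, of `(0, β, y - t) / (1 - t)` and `(1, (x - β) / t, 1)`. The first point lies on a copy
of the `(n - 1)`-dimensional `Γ`; the second lies in the hull of the vertices with `ε₀ = 1`,
which is a cube.
-/

open Set

theorem Real.iSup_le_iff_of_nonneg {ι : Type*} [Finite ι] {f : ι → ℝ} (hf : ∀ i, 0 ≤ f i)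
    {a : ℝ} : ⨆ i, f i ≤ a ↔ (∀ i, f i ≤ a) ∧ 0 ≤ a :=
  ⟨fun h => ⟨fun i => (le_ciSup (finite_range f).bddAbove i).trans h,
    (Real.iSup_nonneg hf).trans h⟩, fun h => Real.iSup_le h.1 h.2⟩

theorem le_sum_min_of_le_sum {ι : Type*} [Fintype ι] {x : ι → ℝ} {c : ℝ} (hx : ∀ i, 0 ≤ x i)
    (hc : 0 ≤ c) (h : c ≤ ∑ i, x i) : c ≤ ∑ i, min (x i) c := by
  by_cases hle : ∃ i, c ≤ x i
  · obtain ⟨i, hi⟩ := hle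
    calc c = min (x i) c := (min_eq_right hi).symm
      _ ≤ ∑ i, min (x i) c :=
        Finset.single_le_sum (fun j _ => le_min (hx j) hc) (Finset.mem_univ i)
  · push Not at hle
    simpa only [min_eq_left (hle _).le] using h

theorem AffineMap.mapsTo_convexHull {𝕜 E F : Type*} [Ring 𝕜] [PartialOrder 𝕜] [AddCommGroup E]
    [Module 𝕜 E] [AddCommGroup F] [Module 𝕜 F] (f : E →ᵃ[𝕜] F) {s : Set E} {t : Set F}
    (h : MapsTo f s t) : MapsTo f (convexHull 𝕜 s) (convexHull 𝕜 t) := by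
  rw [mapsTo_iff_image_subset, f.image_convexHull]
  exact convexHull_mono h.image_subset

theorem range_boolIndicator_eq_pi (ι : Type*) :
    range (fun (ε : ι → Bool) (i : ι) => if ε i then (1 : ℝ) else 0) =
      univ.pi fun _ => ({0, 1} : Set ℝ) := by
  ext v
  constructor
  · rintro ⟨ε, rfl⟩ i -
    cases ε i <;> simp
  · intro hv
    refine ⟨fun i => decide (v i = 1), funext fun i => ?_⟩
    rcases hv i (mem_univ i) with h | (h : v i = 1) <;> simp [h]

theorem convexHull_range_boolIndicator (ι : Type*) [Finite ι] :
    convexHull ℝ (range fun (ε : ι → Bool) (i : ι) => if ε i then (1 : ℝ) else 0) =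
      univ.pi fun _ => Icc 0 1 := by
  simp only [range_boolIndicator_eq_pi, convexHull_pi, convexHull_pair, segment_eq_Icc zero_le_one]

def consFst {n : ℕ} (c : ℝ) : (Fin n → ℝ) × ℝ →ᵃ[ℝ] (Fin (n + 1) → ℝ) × ℝ where
  toFun p := (Fin.cons c p.1, p.2)
  linear := ((Fin.consLinearEquiv ℝ fun _ => ℝ).toLinearMap ∘ₗ LinearMap.inr ℝ ℝ _).prodMap
    LinearMap.id
  map_vadd' p v := by
    ext i
    · refine Fin.cases ?_ (fun i => ?_) i <;> simp [Fin.consLinearEquiv, Fin.consEquiv]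
    · simp

theorem consFst_apply {n : ℕ} (c : ℝ) (p : (Fin n → ℝ) × ℝ) :
    consFst c p = (Fin.cons c p.1, p.2) :=
  rfl

def disjunctionVertex {n : ℕ} (ε : Fin n → Bool) : (Fin n → ℝ) × ℝ :=
  (fun i => if ε i then 1 else 0, if ∃ i, ε i then 1 else 0)

def coherentSet (n : ℕ) : Set ((Fin n → ℝ) × ℝ) :=
  {p | (∀ i, p.1 i ∈ Icc 0 p.2) ∧ p.2 ≤ ∑ i, p.1 i ∧ p.2 ∈ Icc 0 1}

theorem coherentSet_eq (n : ℕ) :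
    {p : (Fin n → ℝ) × ℝ | (∀ i, p.1 i ∈ Icc (0 : ℝ) 1) ∧
      (⨆ i, p.1 i) ≤ p.2 ∧ p.2 ≤ min (∑ i, p.1 i) 1} = coherentSet n := by
  ext ⟨x, y⟩
  simp only [coherentSet, mem_ofPred_eq, mem_Icc, le_min_iff]
  constructor
  · rintro ⟨hx, hsup, hsum, hy1⟩
    obtain ⟨hxy, hy0⟩ := (Real.iSup_le_iff_of_nonneg fun i => (hx i).1).1 hsup
    exact ⟨fun i => ⟨(hx i).1, hxy i⟩, hsum, hy0, hy1⟩
  · rintro ⟨hx, hsum, hy0, hy1⟩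
    exact ⟨fun i => ⟨(hx i).1, (hx i).2.trans hy1⟩, Real.iSup_le (fun i => (hx i).2) hy0, hsum, hy1⟩

theorem convex_coherentSet (n : ℕ) : Convex ℝ (coherentSet n) := by
  rintro ⟨x, y⟩ ⟨hx, hsum, hy0, hy1⟩ ⟨x', y'⟩ ⟨hx', hsum', hy0', hy1'⟩ a b ha hb hab
  simp only [coherentSet, mem_ofPred_eq, mem_Icc, Prod.smul_mk, Prod.mk_add_mk, Pi.add_apply,
    Pi.smul_apply, smul_eq_mul, Finset.sum_add_distrib, ← Finset.mul_sum] at *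
  refine ⟨fun i => ⟨?_, ?_⟩, ?_, ?_, ?_⟩
  · nlinarith [(hx i).1, (hx' i).1]
  · nlinarith [(hx i).2, (hx' i).2]
  all_goals nlinarith

theorem disjunctionVertex_mem_coherentSet {n : ℕ} (ε : Fin n → Bool) :
    disjunctionVertex ε ∈ coherentSet n := by
  by_cases hε : ∃ i, ε i
  · obtain ⟨j, hj⟩ := id hε
    refine ⟨fun i => ?_, ?_, ?_⟩ <;> simp only [disjunctionVertex, if_pos hε]
    · split_ifs <;> norm_num
    · simpa [hj] using Finset.single_le_sum (f := fun i => if ε i then (1 : ℝ) else 0)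
        (fun i _ => by split_ifs <;> norm_num) (Finset.mem_univ j)
    · norm_num
  · push Not at hε
    simp [disjunctionVertex, coherentSet, hε]

theorem exists_mem_segment_of_mem_coherentSet {n : ℕ} {p : (Fin (n + 1) → ℝ) × ℝ}
    (hp : p ∈ coherentSet (n + 1)) :
    ∃ q ∈ coherentSet n, ∃ a ∈ univ.pi fun _ : Fin n => Icc (0 : ℝ) 1,
      p ∈ segment ℝ (consFst 0 q) (consFst 1 (a, 1)) := by
  obtain ⟨x, y⟩ := p
  obtain ⟨hx, hsum, hy0, hy1⟩ := hp
  set t := x 0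
  set β : Fin n → ℝ := fun i => min (x i.succ) (y - t)
  have hty : 0 ≤ y - t := sub_nonneg.2 (hx 0).2
  have hβ : ∀ i, β i ∈ Icc 0 (y - t) := fun i => ⟨le_min (hx _).1 hty, min_le_right _ _⟩
  have hxβ : ∀ i, x i.succ - β i ∈ Icc 0 t := fun i =>
    ⟨sub_nonneg.2 (min_le_left _ _),
      sub_le_comm.1 (le_min (by linarith [(hx 0).1]) (by linarith [(hx i.succ).2]))⟩
  have hsumβ : y - t ≤ ∑ i, β i := le_sum_min_of_le_sum (fun i => (hx _).1) hty
    (by rw [Fin.sum_univ_succ] at hsum; linarith)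
  have h1t : 0 ≤ 1 - t := by linarith [(hx 0).2]
  refine ⟨(fun i => β i / (1 - t), (y - t) / (1 - t)), ⟨fun i => ⟨?_, ?_⟩, ?_, ?_, ?_⟩,
    fun i => (x i.succ - β i) / t, fun i _ => ⟨?_, ?_⟩, 1 - t, t, h1t, (hx 0).1, by ring, ?_⟩
  · exact div_nonneg (hβ i).1 h1t
  · exact div_le_div_of_nonneg_right (hβ i).2 h1t
  · rw [← Finset.sum_div]; exact div_le_div_of_nonneg_right hsumβ h1t
  · exact div_nonneg hty h1t
  · exact div_le_one_of_le₀ (by linarith) h1t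
  · exact div_nonneg (hxβ i).1 (hx 0).1
  · exact div_le_one_of_le₀ (hxβ i).2 (hx 0).1
  -- At `t = 0` or `t = 1` we divide by zero, but then the corresponding numerators vanish too.
  have cancel : ∀ {a b : ℝ}, 0 ≤ b → b ≤ a → a * (b / a) = b := fun h0 hba =>
    mul_div_cancel_of_imp' fun ha => le_antisymm (ha ▸ hba) h0
  simp only [consFst_apply, Prod.smul_mk, Prod.mk_add_mk, smul_eq_mul, mul_one]
  ext i
  · refine Fin.cases ?_ (fun i => ?_) i
    · simp [t]
    · simp only [Pi.add_apply, Pi.smul_apply, Fin.cons_succ, smul_eq_mul]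
      rw [cancel (hβ i).1 ((hβ i).2.trans (by linarith)), cancel (hxβ i).1 (hxβ i).2]
      ring
  · rw [cancel hty (by linarith)]
    ring

theorem consFst_zero_mapsTo_convexHull (n : ℕ) :
    MapsTo (consFst 0) (convexHull ℝ (range (disjunctionVertex (n := n))))
      (convexHull ℝ (range disjunctionVertex)) := by
  refine (consFst 0).mapsTo_convexHull ?_
  rintro _ ⟨ε, rfl⟩
  refine ⟨Fin.cons false ε, ?_⟩
  refine Prod.ext (funext fun i => Fin.cases ?_ (fun i => ?_) i) ?_ <;>
    simp [disjunctionVertex, consFst_apply, Fin.exists_fin_succ]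

theorem consFst_one_mem_convexHull {n : ℕ} {a : Fin n → ℝ} (ha : a ∈ univ.pi fun _ => Icc 0 1) :
    consFst 1 (a, 1) ∈ convexHull ℝ (range (disjunctionVertex (n := n + 1))) := by
  have hmem : (a, (1 : ℝ)) ∈ convexHull ℝ ((range fun (ε : Fin n → Bool) (i : Fin n) =>
      if ε i then (1 : ℝ) else 0) ×ˢ {1}) := by
    rw [convexHull_prod, convexHull_singleton, convexHull_range_boolIndicator]
    exact ⟨ha, rfl⟩
  refine (consFst 1).mapsTo_convexHull ?_ hmem
  rintro ⟨_, _⟩ ⟨⟨ε, rfl⟩, rfl⟩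
  refine ⟨Fin.cons true ε, ?_⟩
  refine Prod.ext (funext fun i => Fin.cases ?_ (fun i => ?_) i) ?_ <;>
    simp [disjunctionVertex, consFst_apply, Fin.exists_fin_succ]

theorem coherentSet_subset_convexHull (n : ℕ) :
    coherentSet n ⊆ convexHull ℝ (range disjunctionVertex) := by
  induction n with
  | zero =>
    rintro ⟨x, y⟩ ⟨-, hsum, hy0, -⟩
    refine subset_convexHull ℝ _ ⟨finZeroElim, Prod.ext (Subsingleton.elim _ _) ?_⟩
    simp only [Finset.univ_eq_empty, Finset.sum_empty] at hsum
    simp [disjunctionVertex, le_antisymm hsum hy0]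
  | succ n ih =>
    intro p hp
    obtain ⟨q, hq, a, ha, hseg⟩ := exists_mem_segment_of_mem_coherentSet hp
    exact (convex_convexHull ℝ _).segment_subset (consFst_zero_mapsTo_convexHull n (ih hq))
      (consFst_one_mem_convexHull ha) hseg

theorem convexHull_eq_coherent_set_disjunction_general (n : ℕ) :
    convexHull ℝ {q : (Fin n → ℝ) × ℝ | ∃ ε : Fin n → Bool,
        q = (fun i => if ε i then 1 else 0, if ∃ i, ε i then (1 : ℝ) else 0)} =
      {p : (Fin n → ℝ) × ℝ | (∀ i, p.1 i ∈ Set.Icc (0 : ℝ) 1) ∧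
        (⨆ i, p.1 i) ≤ p.2 ∧ p.2 ≤ min (∑ i, p.1 i) 1} := by
  have hvertices : {q : (Fin n → ℝ) × ℝ | ∃ ε : Fin n → Bool,
      q = (fun i => if ε i then 1 else 0, if ∃ i, ε i then (1 : ℝ) else 0)} =
      range disjunctionVertex :=
    Set.ext fun _ => exists_congr fun _ => eq_comm
  rw [hvertices, coherentSet_eq]
  refine (convexHull_min ?_ (convex_coherentSet n)).antisymm (coherentSet_subset_convexHull n)
  rintro _ ⟨ε, rfl⟩
  exact disjunctionVertex_mem_coherentSet ε

/-- Sharpness of the Fréchet–Hoeffding bounds for the disjunction of n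
    conditional events: the convex hull of the 2ⁿ points
    `w(ε) = (ε₁,…,εₙ, max{ε₁,…,εₙ})`, `ε ∈ {0,1}ⁿ`, equals the set Γ of points
    with `(x₁,…,xₙ) ∈ [0,1]ⁿ` and `S_M(x₁,…,xₙ) ≤ y ≤ S_L(x₁,…,xₙ)`. -/
theorem convexHull_eq_coherent_set_disjunction (n : ℕ) (hn : 2 ≤ n) :
    convexHull ℝ {q : (Fin n → ℝ) × ℝ | ∃ ε : Fin n → Bool,
        q = (fun i => if ε i then 1 else 0, if ∃ i, ε i then (1 : ℝ) else 0)} =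
      {p : (Fin n → ℝ) × ℝ | (∀ i, p.1 i ∈ Set.Icc (0 : ℝ) 1) ∧
        (⨆ i, p.1 i) ≤ p.2 ∧ p.2 ≤ min (∑ i, p.1 i) 1} :=
  convexHull_eq_coherent_set_disjunction_general n
end

section
/- Let x, y ∈ [0,1] and let z ∈ ℝ satisfy max(x+y−1, 0) ≤ z ≤ min(x, y). Then z is the value of a Frank t-norm at (x, y): either z = min(x, y), or z = x·y, or z = max(x+y−1, 0), or there exists λ ∈ (0, ∞) with λ ≠ 1 such that z = log(1 + (λˣ − 1)(λʸ − 1)/(λ − 1)) / log λ. -/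
/-!
For fixed `x, y ∈ (0,1)` the map `λ ↦ T_λ(x,y)` is continuous on `(0,1)` and on `(1,∞)` and
tends to `min(x,y)`, `xy` and `max(x+y-1,0)` as `λ → 0⁺`, `λ → 1` and `λ → ∞`, so by the
intermediate value theorem it takes every value in between. At `λ = 1` numerator and denominator
of `T_λ` vanish and the limit is the ratio of their derivatives. As `λ → 0⁺`, pulling
`λ^min(x,y)` out of the argument of the logarithm leaves a factor with a positive limit. The limit
at `∞` reduces to the one at `0⁺` through the duality `T_{1/λ}(x,y) = x - T_λ(x,1-y)`.
Finally, a value `z` strictly between `max(x+y-1,0)` and `min(x,y)` forces `x, y ∈ (0,1)`.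
-/

open Real Filter Set Topology

theorem HasDerivAt.tendsto_div_nhdsNE {𝕜 : Type*} [NontriviallyNormedField 𝕜] {f g : 𝕜 → 𝕜}
    {f' g' a : 𝕜} (hf : HasDerivAt f f' a) (hg : HasDerivAt g g' a) (hfa : f a = 0)
    (hga : g a = 0) (hg' : g' ≠ 0) :
    Tendsto (fun t => f t / g t) (𝓝[≠] a) (𝓝 (f' / g')) := by
  refine ((hasDerivAt_iff_tendsto_slope.1 hf).div (hasDerivAt_iff_tendsto_slope.1 hg)
    hg').congr' ?_
  filter_upwards [self_mem_nhdsWithin] with t ht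
  rw [Pi.div_apply, slope_def_field, slope_def_field, hfa, hga, sub_zero, sub_zero,
    div_div_div_cancel_right₀ (sub_ne_zero.2 ht)]

lemma tendsto_rpow_sub_one_div_sub_one (p : ℝ) :
    Tendsto (fun l : ℝ => (l ^ p - 1) / (l - 1)) (𝓝[≠] 1) (𝓝 p) := by
  have h := hasDerivAt_iff_tendsto_slope.1
    (hasDerivAt_rpow_const (x := 1) (p := p) (Or.inl one_ne_zero))
  rw [one_rpow, mul_one] at h
  refine h.congr fun l => ?_
  rw [slope_def_field, one_rpow]

lemma tendsto_log_div_log_nhdsGT_zero {f : ℝ → ℝ} {c : ℝ} (hf : Tendsto f (𝓝[>] 0) (𝓝 c))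
    (hc : c ≠ 0) : Tendsto (fun l => log (f l) / log l) (𝓝[>] 0) (𝓝 0) := by
  simpa [div_eq_mul_inv] using
    ((continuousAt_log hc).tendsto.comp hf).mul tendsto_log_nhdsGT_zero.inv_tendsto_atBot

noncomputable def frankArg (l x y : ℝ) : ℝ := 1 + (l ^ x - 1) * (l ^ y - 1) / (l - 1)

noncomputable def frankTNorm (l x y : ℝ) : ℝ := log (frankArg l x y) / log l

section

variable {l x y : ℝ}

lemma frankTNorm_comm (l x y : ℝ) : frankTNorm l x y = frankTNorm l y x := by
  rw [frankTNorm, frankTNorm, frankArg, frankArg, mul_comm (l ^ x - 1)]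

lemma frankArg_pos (hl : 0 < l) (hl1 : l ≠ 1) (hx : x ∈ Icc (0 : ℝ) 1) (hy : y ∈ Icc (0 : ℝ) 1) :
    0 < frankArg l x y := by
  rw [frankArg]
  rcases hl1.lt_or_gt with hl1 | hl1
  · have hlx : l ≤ l ^ x := by simpa using rpow_le_rpow_of_exponent_ge hl hl1.le hx.2
    have hlx1 : l ^ x ≤ 1 := rpow_le_one hl.le hl1.le hx.1
    have hly : 0 < l ^ y := rpow_pos_of_pos hl y
    have hly1 : l ^ y ≤ 1 := rpow_le_one hl.le hl1.le hy.1
    have : (1 - l ^ x) * (1 - l ^ y) < 1 - l := by nlinarith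
    have : -1 < (l ^ x - 1) * (l ^ y - 1) / (l - 1) := by
      rw [lt_div_iff_of_neg (by linarith)]; nlinarith
    linarith
  · have hlx : 1 ≤ l ^ x := one_le_rpow hl1.le hx.1
    have hly : 1 ≤ l ^ y := one_le_rpow hl1.le hy.1
    have : 0 ≤ (l ^ x - 1) * (l ^ y - 1) / (l - 1) := by
      apply div_nonneg (by nlinarith) (by linarith)
    linarith

lemma continuousAt_frankTNorm (hl : 0 < l) (hl1 : l ≠ 1) (hx : x ∈ Icc (0 : ℝ) 1)
    (hy : y ∈ Icc (0 : ℝ) 1) : ContinuousAt (fun l => frankTNorm l x y) l := by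
  have hrpow (p : ℝ) : ContinuousAt (fun l : ℝ => l ^ p) l :=
    continuousAt_rpow_const l p (.inl hl.ne')
  have harg : ContinuousAt (fun l => frankArg l x y) l :=
    continuousAt_const.add ((((hrpow x).sub continuousAt_const).mul
      ((hrpow y).sub continuousAt_const)).div (continuousAt_id.sub continuousAt_const)
      (sub_ne_zero.2 hl1))
  exact (harg.log (frankArg_pos hl hl1 hx hy).ne').div (continuousAt_log hl.ne')
    (log_ne_zero_of_pos_of_ne_one hl hl1)

-- `frankArg 1 x y = 1` since `0 / 0 = 0`, which is the value of the continuous extension.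
lemma hasDerivAt_frankArg_one (x y : ℝ) : HasDerivAt (fun l => frankArg l x y) (x * y) 1 := by
  rw [hasDerivAt_iff_tendsto_slope]
  refine ((tendsto_rpow_sub_one_div_sub_one x).mul (tendsto_rpow_sub_one_div_sub_one y)).congr' ?_
  filter_upwards [self_mem_nhdsWithin] with l hl
  have : l - 1 ≠ 0 := sub_ne_zero.2 hl
  simp only [slope_def_field, frankArg, one_rpow, sub_self, mul_zero, zero_div, add_zero]
  field_simp
  ring

lemma tendsto_frankTNorm_one (x y : ℝ) :
    Tendsto (fun l => frankTNorm l x y) (𝓝[≠] 1) (𝓝 (x * y)) := by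
  have h1 : frankArg 1 x y = 1 := by simp [frankArg]
  have hf := (hasDerivAt_log (x := frankArg 1 x y) (by rw [h1]; exact one_ne_zero)).comp 1
    (hasDerivAt_frankArg_one x y)
  have h := hf.tendsto_div_nhdsNE (hasDerivAt_log one_ne_zero) (by simp [h1]) log_one
    (inv_ne_zero one_ne_zero)
  simpa [h1, frankTNorm] using h

lemma frankArg_eq_rpow_mul (hl : 0 < l) (hl1 : l ≠ 1) :
    frankArg l x y = l ^ x * ((l ^ (1 - x) + l ^ y - l ^ (y - x) - 1) / (l - 1)) := by
  have : l - 1 ≠ 0 := sub_ne_zero.2 hl1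
  have : 0 < l ^ x := rpow_pos_of_pos hl x
  rw [frankArg, rpow_sub hl, rpow_sub hl, rpow_one]
  field_simp
  ring

lemma tendsto_frankTNorm_nhdsGT_zero_of_le (hx : x < 1) (hy : 0 < y) (hxy : x ≤ y) :
    Tendsto (fun l => frankTNorm l x y) (𝓝[>] 0) (𝓝 x) := by
  set Q : ℝ → ℝ := fun l => (l ^ (1 - x) + l ^ y - l ^ (y - x) - 1) / (l - 1)
  have hrpow {p : ℝ} (hp : 0 ≤ p) : ContinuousAt (fun l : ℝ => l ^ p) 0 :=
    continuousAt_rpow_const 0 p (.inr hp)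
  have hQ : Tendsto Q (𝓝[>] 0) (𝓝 (1 + 0 ^ (y - x))) := by
    have hcont : ContinuousAt Q 0 :=
      ((((hrpow (by linarith)).add (hrpow hy.le)).sub (hrpow (by linarith))).sub
        continuousAt_const).div (continuousAt_id.sub continuousAt_const) (by norm_num)
    have h := hcont.tendsto.mono_left (nhdsWithin_le_nhds (s := Ioi 0))
    rwa [show Q 0 = 1 + 0 ^ (y - x) by
      simp [Q, zero_rpow (sub_pos.2 hx).ne', zero_rpow hy.ne']; ring] at h
  have hc : (1 : ℝ) + 0 ^ (y - x) ≠ 0 := by positivity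
  have h := (tendsto_const_nhds (x := x)).add (tendsto_log_div_log_nhdsGT_zero hQ hc)
  rw [add_zero] at h
  refine h.congr' ?_
  filter_upwards [Ioo_mem_nhdsGT one_pos, hQ.eventually_ne hc] with l ⟨hl0, hl1⟩ hQl
  rw [frankTNorm, frankArg_eq_rpow_mul hl0 hl1.ne, log_mul (rpow_pos_of_pos hl0 x).ne' hQl,
    log_rpow hl0]
  field_simp [log_ne_zero_of_pos_of_ne_one hl0 hl1.ne]

lemma tendsto_frankTNorm_nhdsGT_zero (hx : x ∈ Ioo (0 : ℝ) 1) (hy : y ∈ Ioo (0 : ℝ) 1) :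
    Tendsto (fun l => frankTNorm l x y) (𝓝[>] 0) (𝓝 (min x y)) := by
  rcases le_total x y with hxy | hxy
  · rw [min_eq_left hxy]
    exact tendsto_frankTNorm_nhdsGT_zero_of_le hx.2 hy.1 hxy
  · simp_rw [min_eq_right hxy, frankTNorm_comm _ x]
    exact tendsto_frankTNorm_nhdsGT_zero_of_le hy.2 hx.1 hxy

lemma frankTNorm_inv (hl : 0 < l) (hl1 : l ≠ 1) (hx : x ∈ Icc (0 : ℝ) 1) (hy : y ∈ Icc (0 : ℝ) 1) :
    frankTNorm l⁻¹ x y = x - frankTNorm l x (1 - y) := by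
  have hA := frankArg_pos hl hl1 hx ⟨sub_nonneg.2 hy.2, sub_le_self 1 hy.1⟩
  have hlx : 0 < l ^ x := rpow_pos_of_pos hl x
  have : l - 1 ≠ 0 := sub_ne_zero.2 hl1
  have : l⁻¹ - 1 ≠ 0 := sub_ne_zero.2 (inv_ne_one.2 hl1)
  have hinv : frankArg l⁻¹ x y = (l ^ x)⁻¹ * frankArg l x (1 - y) := by
    rw [frankArg, frankArg, inv_rpow hl.le, inv_rpow hl.le, rpow_sub hl, rpow_one]
    field_simp
    ring
  rw [frankTNorm, frankTNorm, hinv, log_mul (inv_ne_zero hlx.ne') hA.ne', log_inv, log_inv,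
    log_rpow hl]
  field_simp [log_ne_zero_of_pos_of_ne_one hl hl1]
  ring

lemma tendsto_frankTNorm_atTop (hx : x ∈ Ioo (0 : ℝ) 1) (hy : y ∈ Ioo (0 : ℝ) 1) :
    Tendsto (fun l => frankTNorm l x y) atTop (𝓝 (max (x + y - 1) 0)) := by
  have hy' : 1 - y ∈ Ioo (0 : ℝ) 1 := ⟨sub_pos.2 hy.2, sub_lt_self 1 hy.1⟩
  have h := tendsto_const_nhds (x := x) |>.sub
    ((tendsto_frankTNorm_nhdsGT_zero hx hy').comp tendsto_inv_atTop_nhdsGT_zero)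
  rw [show x - min x (1 - y) = max (x + y - 1) 0 by
    rw [← max_sub_sub_left, sub_self, max_comm, sub_sub_eq_add_sub]] at h
  refine h.congr' ?_
  filter_upwards [eventually_gt_atTop 1] with l hl
  have := frankTNorm_inv (zero_lt_one.trans hl) hl.ne' (Ioo_subset_Icc_self hx)
    (Ioo_subset_Icc_self hy')
  simp only [Function.comp_apply, sub_sub_cancel] at this ⊢
  linarith

lemma Ioo_max_mul_subset_image_frankTNorm (hx : x ∈ Ioo (0 : ℝ) 1) (hy : y ∈ Ioo (0 : ℝ) 1) :
    Ioo (max (x + y - 1) 0) (x * y) ⊆ (fun l => frankTNorm l x y) '' Ioi 1 :=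
  isPreconnected_Ioi.intermediate_value_Ioo (le_principal_iff.2 (Ioi_mem_atTop 1))
    (le_principal_iff.2 self_mem_nhdsWithin)
    (continuousOn_of_forall_continuousAt fun _ hl => continuousAt_frankTNorm
      (zero_lt_one.trans hl) (ne_of_gt hl) (Ioo_subset_Icc_self hx) (Ioo_subset_Icc_self hy))
    (tendsto_frankTNorm_atTop hx hy)
    ((tendsto_frankTNorm_one x y).mono_left (nhdsWithin_mono _ fun _ hl => ne_of_gt hl))

lemma Ioo_mul_min_subset_image_frankTNorm (hx : x ∈ Ioo (0 : ℝ) 1) (hy : y ∈ Ioo (0 : ℝ) 1) :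
    Ioo (x * y) (min x y) ⊆ (fun l => frankTNorm l x y) '' Ioo 0 1 :=
  isPreconnected_Ioo.intermediate_value_Ioo (l₁ := 𝓝[<] 1)
    (le_principal_iff.2 (Ioo_mem_nhdsLT zero_lt_one))
    (le_principal_iff.2 (Ioo_mem_nhdsGT zero_lt_one))
    (continuousOn_of_forall_continuousAt fun _ hl => continuousAt_frankTNorm hl.1 hl.2.ne
      (Ioo_subset_Icc_self hx) (Ioo_subset_Icc_self hy))
    ((tendsto_frankTNorm_one x y).mono_left (nhdsWithin_mono _ fun _ hl => ne_of_lt hl))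
    (tendsto_frankTNorm_nhdsGT_zero hx hy)

lemma mem_Ioo_of_max_add_sub_one_lt_min (h : max (x + y - 1) 0 < min x y) :
    x ∈ Ioo (0 : ℝ) 1 ∧ y ∈ Ioo (0 : ℝ) 1 := by
  simp only [max_lt_iff, lt_min_iff] at h
  exact ⟨⟨by linarith, by linarith⟩, by linarith, by linarith⟩

end

theorem frank_tnorm_representation_general (x y z : ℝ)
    (h1 : max (x + y - 1) 0 ≤ z) (h2 : z ≤ min x y) :
    z = min x y ∨ z = x * y ∨ z = max (x + y - 1) 0 ∨
      ∃ l : ℝ, 0 < l ∧ l ≠ 1 ∧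
        z = Real.log (1 + (l ^ x - 1) * (l ^ y - 1) / (l - 1)) / Real.log l := by
  rcases h1.eq_or_lt with h1 | h1
  · exact Or.inr (Or.inr (Or.inl h1.symm))
  rcases h2.eq_or_lt with h2 | h2
  · exact Or.inl h2
  obtain ⟨hx, hy⟩ := mem_Ioo_of_max_add_sub_one_lt_min (h1.trans h2)
  refine Or.inr ?_
  rcases lt_trichotomy z (x * y) with hz | hz | hz
  · obtain ⟨l, hl, rfl⟩ := Ioo_max_mul_subset_image_frankTNorm hx hy ⟨h1, hz⟩
    exact Or.inr (Or.inr ⟨l, zero_lt_one.trans hl, ne_of_gt hl, rfl⟩)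
  · exact Or.inl hz
  · obtain ⟨l, hl, rfl⟩ := Ioo_mul_min_subset_image_frankTNorm hx hy ⟨hz, h2⟩
    exact Or.inr (Or.inr ⟨l, hl.1, hl.2.ne, rfl⟩)

/-- Any coherent prevision `z` of the conjunction of two conditional events,
    i.e. any `z` with `max(x+y−1,0) ≤ z ≤ min(x,y)`, is the value of a Frank
    t-norm `T_λ` at `(x,y)` for some `λ ∈ [0,+∞]`. -/
theorem frank_tnorm_representation (x y z : ℝ)
    (hx : x ∈ Set.Icc (0 : ℝ) 1) (hy : y ∈ Set.Icc (0 : ℝ) 1)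
    (h1 : max (x + y - 1) 0 ≤ z) (h2 : z ≤ min x y) :
    z = min x y ∨ z = x * y ∨ z = max (x + y - 1) 0 ∨
      ∃ l : ℝ, 0 < l ∧ l ≠ 1 ∧
        z = Real.log (1 + (l ^ x - 1) * (l ^ y - 1) / (l - 1)) / Real.log l :=
  frank_tnorm_representation_general x y z h1 h2
end

section
/- Let x, y ∈ [0,1] and consider the six points of ℝ³: Q₁ = (1,1,1), Q₂ = (0,0,0), Q₃ = (x,0,0), Q₄ = (0,y,0), Q₅ = (x,1,x), Q₆ = (1,y,y). Then every point (X, Y, Z) belonging to the convex hull of {Q₁,…,Q₆} satisfies y·X + x·Y − Z ≤ x·y. -/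
/-- The convex hull of `Q₁=(1,1,1), Q₂=(0,0,0), Q₃=(x,0,0), Q₄=(0,y,0),
    Q₅=(x,1,x), Q₆=(1,y,y)` lies in the half-space `y·X + x·Y − Z ≤ x·y`. -/
theorem convexHull_halfspace_bound (x y : ℝ)
    (hx : x ∈ Set.Icc (0 : ℝ) 1) (hy : y ∈ Set.Icc (0 : ℝ) 1)
    (p : Fin 3 → ℝ)
    (hp : p ∈ convexHull ℝ
      ({![1, 1, 1], ![0, 0, 0], ![x, 0, 0], ![0, y, 0], ![x, 1, x],
        ![1, y, y]} : Set (Fin 3 → ℝ))) :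
    y * p 0 + x * p 1 - p 2 ≤ x * y := by
  obtain ⟨hx0, hx1⟩ := hx
  obtain ⟨hy0, hy1⟩ := hy
  have hlin : IsLinearMap ℝ (fun q : Fin 3 → ℝ => y * q 0 + x * q 1 - q 2) := by
    constructor
    · intro a b; simp [Pi.add_apply]; ring
    · intro c a; simp [Pi.smul_apply, smul_eq_mul]; ring
  have hconv : Convex ℝ {q : Fin 3 → ℝ | y * q 0 + x * q 1 - q 2 ≤ x * y} :=
    convex_halfSpace_le hlin (x * y)
  refine convexHull_min ?_ hconv hp
  intro q hq
  simp only [Set.mem_insert_iff, Set.mem_singleton_iff] at hq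
  rcases hq with h | h | h | h | h | h <;> subst h <;>
    simp only [Set.mem_setOf_eq, Matrix.cons_val_zero, Matrix.cons_val_one,
      Matrix.head_cons, Matrix.cons_val_two, Matrix.tail_cons] <;> nlinarith
end

section
/- The convex hull in ℝ⁷ of the 8 points u(ε) = (ε₁, ε₂, ε₃, ε₁ε₂, ε₁ε₃, ε₂ε₃, ε₁ε₂ε₃) with ε ∈ {0,1}³ equals the set of points (x₁, x₂, x₃, x₁₂, x₁₃, x₂₃, x₁₂₃) ∈ ℝ⁷ satisfying max{0, x₁₂+x₁₃−x₁, x₁₂+x₂₃−x₂, x₁₃+x₂₃−x₃} ≤ x₁₂₃ ≤ min{x₁₂, x₁₃, x₂₃, 1−x₁−x₂−x₃+x₁₂+x₁₃+x₂₃}. (Polytope form of the characterization of all coherent prevision assessments on {E₁|H₁, E₂|H₂, E₃|H₃, C₁₂, C₁₃, C₂₃, C₁₂₃} for logically independent events.) -/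
private lemma vec7_five (a b c d e f g : ℝ) : ![a,b,c,d,e,f,g] 5 = f := rfl
private lemma vec7_six (a b c d e f g : ℝ) : ![a,b,c,d,e,f,g] 6 = g := rfl

private lemma coherent_set_convex : Convex ℝ {p : Fin 7 → ℝ |
        max (max (max 0 (p 3 + p 4 - p 0)) (p 3 + p 5 - p 1))
          (p 4 + p 5 - p 2) ≤ p 6 ∧
        p 6 ≤ min (min (min (p 3) (p 4)) (p 5))
          (1 - p 0 - p 1 - p 2 + p 3 + p 4 + p 5)} := by
  intro x hx y hy s t hs ht hst
  simp only [Set.mem_setOf_eq, max_le_iff, le_min_iff] at hx hy ⊢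
  obtain ⟨⟨⟨⟨hx1, hx2⟩, hx3⟩, hx4⟩, ⟨⟨hx5, hx6⟩, hx7⟩, hx8⟩ := hx
  obtain ⟨⟨⟨⟨hy1, hy2⟩, hy3⟩, hy4⟩, ⟨⟨hy5, hy6⟩, hy7⟩, hy8⟩ := hy
  simp only [Pi.add_apply, Pi.smul_apply, smul_eq_mul]
  refine ⟨⟨⟨⟨?_, ?_⟩, ?_⟩, ?_⟩, ⟨⟨?_, ?_⟩, ?_⟩, ?_⟩ <;> nlinarith

set_option maxHeartbeats 1000000 in
/-- Polytope form of the characterization of all coherent prevision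
    assessments on three conditional events, their pairwise conjunctions and
    their triple conjunction: the convex hull of the 8 points
    `u(ε) = (ε₁, ε₂, ε₃, ε₁ε₂, ε₁ε₃, ε₂ε₃, ε₁ε₂ε₃)`, `ε ∈ {0,1}³`, equals the
    set of points of ℝ⁷ satisfying the two displayed bounds on the last
    coordinate. -/
theorem convexHull_eq_coherent_set_three_events :
    convexHull ℝ {p : Fin 7 → ℝ | ∃ a b c : Bool,
        p = ![(if a then (1 : ℝ) else 0), (if b then (1 : ℝ) else 0),
              (if c then (1 : ℝ) else 0),
              (if a then (1 : ℝ) else 0) * (if b then (1 : ℝ) else 0),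
              (if a then (1 : ℝ) else 0) * (if c then (1 : ℝ) else 0),
              (if b then (1 : ℝ) else 0) * (if c then (1 : ℝ) else 0),
              (if a then (1 : ℝ) else 0) * (if b then (1 : ℝ) else 0) *
                (if c then (1 : ℝ) else 0)]} =
      {p : Fin 7 → ℝ |
        max (max (max 0 (p 3 + p 4 - p 0)) (p 3 + p 5 - p 1))
          (p 4 + p 5 - p 2) ≤ p 6 ∧
        p 6 ≤ min (min (min (p 3) (p 4)) (p 5))
          (1 - p 0 - p 1 - p 2 + p 3 + p 4 + p 5)} := by
  apply Set.Subset.antisymm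
  · apply convexHull_min
    · rintro p ⟨a, b, c, rfl⟩
      cases a <;> cases b <;> cases c <;>
        simp [Set.mem_setOf_eq, vec7_five, vec7_six]
    · exact coherent_set_convex
  · intro p hp
    simp only [Set.mem_setOf_eq, max_le_iff, le_min_iff] at hp
    obtain ⟨⟨⟨⟨h1, h2⟩, h3⟩, h4⟩, ⟨⟨h5, h6⟩, h7⟩, h8⟩ := hp
    set w : Bool × Bool × Bool → ℝ := fun e =>
      match e with
      | (true, true, true) => p 6
      | (true, true, false) => p 3 - p 6
      | (true, false, true) => p 4 - p 6
      | (false, true, true) => p 5 - p 6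
      | (true, false, false) => p 0 - p 3 - p 4 + p 6
      | (false, true, false) => p 1 - p 3 - p 5 + p 6
      | (false, false, true) => p 2 - p 4 - p 5 + p 6
      | (false, false, false) =>
          1 - p 0 - p 1 - p 2 + p 3 + p 4 + p 5 - p 6 with hw
    set z : Bool × Bool × Bool → (Fin 7 → ℝ) := fun e =>
      ![(if e.1 then (1 : ℝ) else 0), (if e.2.1 then (1 : ℝ) else 0),
        (if e.2.2 then (1 : ℝ) else 0),
        (if e.1 then (1 : ℝ) else 0) * (if e.2.1 then (1 : ℝ) else 0),
        (if e.1 then (1 : ℝ) else 0) * (if e.2.2 then (1 : ℝ) else 0),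
        (if e.2.1 then (1 : ℝ) else 0) * (if e.2.2 then (1 : ℝ) else 0),
        (if e.1 then (1 : ℝ) else 0) * (if e.2.1 then (1 : ℝ) else 0) *
          (if e.2.2 then (1 : ℝ) else 0)] with hz
    have hsum : ∑ e : Bool × Bool × Bool, w e = 1 := by
      simp [hw, Fintype.sum_prod_type]
      ring
    have hpos : ∀ e ∈ (Finset.univ : Finset (Bool × Bool × Bool)), 0 ≤ w e := by
      rintro ⟨a, b, c⟩ -
      cases a <;> cases b <;> cases c <;> simp [hw] <;> linarith
    have heq : Finset.univ.centerMass w z = p := by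
      rw [Finset.centerMass_eq_of_sum_1 _ _ hsum]
      funext i
      fin_cases i <;>
        · simp only [Finset.sum_apply, Pi.smul_apply, smul_eq_mul,
            Fintype.sum_prod_type, Fintype.sum_bool, hw, hz]
          simp [Matrix.cons_val_zero, Matrix.cons_val_one, vec7_five, vec7_six]
          try ring
    rw [← heq]
    exact Finset.centerMass_mem_convexHull _ hpos (by rw [hsum]; norm_num)
      (fun e _ => ⟨e.1, e.2.1, e.2.2, rfl⟩)
end

section
/- Let x₁, x₂, x₃ ∈ [0,1]. Then max{0, x₁x₂+x₁x₃−x₁, x₁x₂+x₂x₃−x₂, x₁x₃+x₂x₃−x₃} ≤ x₁x₂x₃ ≤ min{x₁x₂, x₁x₃, x₂x₃, 1−x₁−x₂−x₃+x₁x₂+x₁x₃+x₂x₃}. In particular, the assessment (x₁, x₂, x₃, x₁x₂, x₁x₃, x₂x₃, x₁x₂x₃) obtained from the Product t-norm satisfies the coherence inequalities. -/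
/-- The assessment obtained from the Product t-norm satisfies the coherence
    inequalities. -/
theorem product_tnorm_coherent (x1 x2 x3 : ℝ)
    (h1 : x1 ∈ Set.Icc (0 : ℝ) 1) (h2 : x2 ∈ Set.Icc (0 : ℝ) 1)
    (h3 : x3 ∈ Set.Icc (0 : ℝ) 1) :
    max (max (max 0 (x1 * x2 + x1 * x3 - x1)) (x1 * x2 + x2 * x3 - x2))
        (x1 * x3 + x2 * x3 - x3) ≤ x1 * x2 * x3 ∧
    x1 * x2 * x3 ≤
      min (min (min (x1 * x2) (x1 * x3)) (x2 * x3))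
        (1 - x1 - x2 - x3 + x1 * x2 + x1 * x3 + x2 * x3) := by
  obtain ⟨a1, b1⟩ := h1
  obtain ⟨a2, b2⟩ := h2
  obtain ⟨a3, b3⟩ := h3
  constructor
  · refine max_le (max_le (max_le (by positivity) ?_) ?_) ?_
    · nlinarith [mul_nonneg (mul_nonneg a1 (sub_nonneg.2 b2)) (sub_nonneg.2 b3)]
    · nlinarith [mul_nonneg (mul_nonneg a2 (sub_nonneg.2 b1)) (sub_nonneg.2 b3)]
    · nlinarith [mul_nonneg (mul_nonneg a3 (sub_nonneg.2 b1)) (sub_nonneg.2 b2)]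
  · refine le_min (le_min (le_min ?_ ?_) ?_) ?_
    · nlinarith [mul_nonneg (mul_nonneg a1 a2) (sub_nonneg.2 b3)]
    · nlinarith [mul_nonneg (mul_nonneg a1 a3) (sub_nonneg.2 b2)]
    · nlinarith [mul_nonneg (mul_nonneg a2 a3) (sub_nonneg.2 b1)]
    · nlinarith [mul_nonneg (mul_nonneg (sub_nonneg.2 b1) (sub_nonneg.2 b2)) (sub_nonneg.2 b3)]
end

section
/- Let x₁, x₂, x₃ ∈ [0,1] with x₁+x₂+x₃−2 ≥ 0, and set x₁₂ = max(x₁+x₂−1, 0), x₁₃ = max(x₁+x₃−1, 0), x₂₃ = max(x₂+x₃−1, 0), x₁₂₃ = max(x₁+x₂+x₃−2, 0). Then max{0, x₁₂+x₁₃−x₁, x₁₂+x₂₃−x₂, x₁₃+x₂₃−x₃} ≤ x₁₂₃ ≤ min{x₁₂, x₁₃, x₂₃, 1−x₁−x₂−x₃+x₁₂+x₁₃+x₂₃}, and both bounds equal x₁+x₂+x₃−2. In particular, the assessment obtained from the Łukasiewicz t-norm satisfies the coherence inequalities whenever x₁+x₂+x₃ ≥ 2. -/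
/-- When `x₁+x₂+x₃−2 ≥ 0`, the assessment obtained from the Łukasiewicz
    t-norm satisfies the coherence inequalities, and both bounds on `x₁₂₃`
    equal `x₁+x₂+x₃−2`. -/
theorem lukasiewicz_tnorm_coherent (x1 x2 x3 x12 x13 x23 x123 : ℝ)
    (h1 : x1 ∈ Set.Icc (0 : ℝ) 1) (h2 : x2 ∈ Set.Icc (0 : ℝ) 1)
    (h3 : x3 ∈ Set.Icc (0 : ℝ) 1)
    (hsum : 0 ≤ x1 + x2 + x3 - 2)
    (h12 : x12 = max (x1 + x2 - 1) 0) (h13 : x13 = max (x1 + x3 - 1) 0)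
    (h23 : x23 = max (x2 + x3 - 1) 0)
    (h123 : x123 = max (x1 + x2 + x3 - 2) 0) :
    max (max (max 0 (x12 + x13 - x1)) (x12 + x23 - x2))
      (x13 + x23 - x3) ≤ x123 ∧
    x123 ≤ min (min (min x12 x13) x23)
      (1 - x1 - x2 - x3 + x12 + x13 + x23) ∧
    max (max (max 0 (x12 + x13 - x1)) (x12 + x23 - x2))
      (x13 + x23 - x3) = x1 + x2 + x3 - 2 ∧
    min (min (min x12 x13) x23)
      (1 - x1 - x2 - x3 + x12 + x13 + x23) = x1 + x2 + x3 - 2 := by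
  obtain ⟨h1a, h1b⟩ := h1
  obtain ⟨h2a, h2b⟩ := h2
  obtain ⟨h3a, h3b⟩ := h3
  have e12 : x12 = x1 + x2 - 1 := by rw [h12, max_eq_left (by linarith)]
  have e13 : x13 = x1 + x3 - 1 := by rw [h13, max_eq_left (by linarith)]
  have e23 : x23 = x2 + x3 - 1 := by rw [h23, max_eq_left (by linarith)]
  have e123 : x123 = x1 + x2 + x3 - 2 := by rw [h123, max_eq_left hsum]
  subst e12 e13 e23 e123
  refine ⟨?_, ?_, ?_, ?_⟩
  · exact max_le (max_le (max_le hsum (by linarith)) (by linarith)) (by linarith)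
  · exact le_min (le_min (le_min (by linarith) (by linarith)) (by linarith)) (by linarith)
  · rw [show x1 + x2 - 1 + (x1 + x3 - 1) - x1 = x1 + x2 + x3 - 2 from by ring,
      show x1 + x2 - 1 + (x2 + x3 - 1) - x2 = x1 + x2 + x3 - 2 from by ring,
      show x1 + x3 - 1 + (x2 + x3 - 1) - x3 = x1 + x2 + x3 - 2 from by ring,
      max_eq_right hsum, max_self, max_self]
  · rw [show 1 - x1 - x2 - x3 + (x1 + x2 - 1) + (x1 + x3 - 1) + (x2 + x3 - 1)
        = x1 + x2 + x3 - 2 from by ring,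
      min_eq_right (le_min (le_min (by linarith) (by linarith)) (by linarith))]
end

section
/- Let x₁, x₂, x₃ ∈ [0,1] with x₁+x₂−1 > 0, x₁+x₃−1 > 0, x₂+x₃−1 > 0, and x₁+x₂+x₃−2 < 0, and set x₁₂ = max(x₁+x₂−1, 0), x₁₃ = max(x₁+x₃−1, 0), x₂₃ = max(x₂+x₃−1, 0). Then 1−x₁−x₂−x₃+x₁₂+x₁₃+x₂₃ = x₁+x₂+x₃−2 < 0, and consequently there exists no real number x₁₂₃ satisfying max{0, x₁₂+x₁₃−x₁, x₁₂+x₂₃−x₂, x₁₃+x₂₃−x₃} ≤ x₁₂₃ ≤ min{x₁₂, x₁₃, x₂₃, 1−x₁−x₂−x₃+x₁₂+x₁₃+x₂₃}. In particular, the assessment obtained from the Łukasiewicz t-norm is not coherent under these conditions. -/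
/-- When `x₁+x₂−1 > 0`, `x₁+x₃−1 > 0`, `x₂+x₃−1 > 0` and `x₁+x₂+x₃−2 < 0`,
    the assessment obtained from the Łukasiewicz t-norm is not coherent:
    `1−x₁−x₂−x₃+x₁₂+x₁₃+x₂₃ = x₁+x₂+x₃−2 < 0` and no extension `x₁₂₃`
    satisfying the coherence bounds exists. -/
theorem lukasiewicz_tnorm_incoherent (x1 x2 x3 x12 x13 x23 : ℝ)
    (h1 : x1 ∈ Set.Icc (0 : ℝ) 1) (h2 : x2 ∈ Set.Icc (0 : ℝ) 1)
    (h3 : x3 ∈ Set.Icc (0 : ℝ) 1)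
    (h12pos : 0 < x1 + x2 - 1) (h13pos : 0 < x1 + x3 - 1)
    (h23pos : 0 < x2 + x3 - 1)
    (hsum : x1 + x2 + x3 - 2 < 0)
    (h12 : x12 = max (x1 + x2 - 1) 0) (h13 : x13 = max (x1 + x3 - 1) 0)
    (h23 : x23 = max (x2 + x3 - 1) 0) :
    1 - x1 - x2 - x3 + x12 + x13 + x23 = x1 + x2 + x3 - 2 ∧
    1 - x1 - x2 - x3 + x12 + x13 + x23 < 0 ∧
    ¬ ∃ x123 : ℝ,
      max (max (max 0 (x12 + x13 - x1)) (x12 + x23 - x2))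
        (x13 + x23 - x3) ≤ x123 ∧
      x123 ≤ min (min (min x12 x13) x23)
        (1 - x1 - x2 - x3 + x12 + x13 + x23) := by
  rw [h12, h13, h23, max_eq_left h12pos.le, max_eq_left h13pos.le,
    max_eq_left h23pos.le]
  refine ⟨by ring, by linarith, ?_⟩
  rintro ⟨x123, hlo, hhi⟩
  have h0 : (0:ℝ) ≤ x123 :=
    le_trans (le_trans (le_max_left _ _) (le_trans (le_max_left _ _) (le_max_left _ _))) hlo
  have : x123 ≤ 1 - x1 - x2 - x3 + (x1 + x2 - 1) + (x1 + x3 - 1) + (x2 + x3 - 1) :=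
    le_trans hhi (min_le_right _ _)
  linarith
end
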